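/- arXiv:2302.02421 — 2 statements merged into one kernel-verified Lean document; each statement's English description precedes it below -/
import Mathlib

section
/- Let G be a compact connected Lie group of rank ℓ with Lie algebra g, let (ν_big, g*_{s-reg}) be a strong Gelfand–Cetlin datum on g*, and let M be a connected symplectic manifold endowed with an effective Hamiltonian G-action and proper moment map μ: M → g*. Suppose ξ ∈ g* and η ∈ g*_{μ,s-reg} satisfy ν_big(ξ) = ν_big(η). Then ξ ∈ g*_{μ,s-reg}, the coadjoint orbits O_ξ and O_η coincide, and the fiber ν_big^{-1}(ν_big(η)) is contained in O_η. -/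
/-!
Common abstract framework for Crooks–Weitsman, "A non-abelian Duistermaat–Heckman
theorem" (arXiv:2302.02421).

`G` is a compact connected Lie group of rank `ℓ`.  The normed space `E` plays the
role of the dual `g*` of the Lie algebra `g` of `G`, and `E →L[ℝ] ℝ` plays the role
of `g ≅ g**`.  We write `u = (dim g - ℓ)/2`, so that `b = ℓ + u = (dim g + ℓ)/2`.
Notions with no Mathlib formalization (the exponential lattice `Λ_ξ`, symplectic
forms, Liouville measures, symplectic volumes of coadjoint orbits and of symplectic
quotients, Hamiltonian/moment-map conditions for the torus actions of a
Gelfand–Cetlin datum) are carried as abstract data, documented in the comments.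
-/

open MeasureTheory Set Function
open scoped ENNReal NNReal Manifold

noncomputable section

/-- `ℝ_big = ℝ^ℓ × ℝ^u ≅ ℝ^b` where `b = ℓ + u = (dim g + rank G)/2`.  Its `volume`
is the Lebesgue measure `λ_big`, dual to the Haar measure on `𝕋_big = U(1)^b`
normalized to total volume `1`. -/
abbrev RBig (ℓ u : ℕ) : Type := (Fin ℓ → ℝ) × (Fin u → ℝ)

/-- The Lie-theoretic setting: a compact connected Lie group `G` of rank `ℓ`, with
`E = g*`, the coadjoint `G`-action `coadj` on `g*`, the infinitesimal coadjoint
action `ad` of `g = E →L[ℝ] ℝ` on `g*`, the lattices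
`Λ_ξ = (1/2π) ker (exp|_{g_ξ}) ⊂ g_ξ ⊂ g` (abstract data, since the Lie-group
exponential is not formalized), and the symplectic (Liouville) volumes `volOrbit ξ`
of the coadjoint orbits `O_ξ` for their Kirillov–Kostant–Souriau symplectic forms
(abstract data). -/
structure CoadjointSetting (G : Type*) [Group G] [TopologicalSpace G]
    [IsTopologicalGroup G] [CompactSpace G] [ConnectedSpace G]
    (E : Type*) [NormedAddCommGroup E] [NormedSpace ℝ E] [FiniteDimensional ℝ E]
    (ℓ u : ℕ) : Type _ where
  /-- the coadjoint action of `G` on `g*` -/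
  coadj : G →* (E ≃L[ℝ] E)
  coadj_continuous : Continuous fun p : G × E => coadj p.1 p.2
  /-- the infinitesimal coadjoint action of `g ≅ g** = (E →L[ℝ] ℝ)` on `g* = E` -/
  ad : (E →L[ℝ] ℝ) →ₗ[ℝ] E →ₗ[ℝ] E
  /-- `dim g = ℓ + 2u`, i.e. `u = (dim g - ℓ)/2` -/
  dim_eq : Module.finrank ℝ E = ℓ + 2 * u
  /-- `Λ_ξ = (1/2π) ker (exp|_{g_ξ})` (abstract data) -/
  lattice : E → Submodule ℤ (E →L[ℝ] ℝ)
  /-- `Λ_ξ` is contained in the centralizer `g_ξ = {x : g | ad*_x ξ = 0}` -/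
  lattice_le : ∀ (ξ : E), ∀ x ∈ lattice ξ, ad x ξ = 0
  /-- the symplectic volume of the coadjoint orbit `O_ξ` (abstract data) -/
  volOrbit : E → ℝ≥0
  volOrbit_invariant : ∀ (g : G) (ξ : E), volOrbit (coadj g ξ) = volOrbit ξ

namespace CoadjointSetting

variable {G : Type*} [Group G] [TopologicalSpace G] [IsTopologicalGroup G]
  [CompactSpace G] [ConnectedSpace G]
  {E : Type*} [NormedAddCommGroup E] [NormedSpace ℝ E] [FiniteDimensional ℝ E]
  {ℓ u : ℕ}

/-- the centralizer `g_ξ ⊂ g` of `ξ ∈ g*` under the infinitesimal coadjoint action -/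
def centralizer (S : CoadjointSetting G E ℓ u) (ξ : E) : Submodule ℝ (E →L[ℝ] ℝ) :=
  LinearMap.ker (S.ad.flip ξ)

/-- the set `g*_reg` of regular elements: those `ξ ∈ g*` with `dim g_ξ = ℓ = rank G` -/
def reg (S : CoadjointSetting G E ℓ u) : Set E :=
  {ξ | Module.finrank ℝ (S.centralizer ξ) = ℓ}

/-- the coadjoint orbit `O_ξ ⊂ g*` of `G` through `ξ` -/
def orbit (S : CoadjointSetting G E ℓ u) (ξ : E) : Set E :=
  Set.range fun g : G => S.coadj g ξ

end CoadjointSetting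

/-- A *Gelfand–Cetlin datum* `(ν_big, g*_{s-reg})` on `g*`
(Crooks–Weitsman, Definition 1): a continuous map
`ν_big = (ν_small, ν_int) : g* → ℝ_big = ℝ^ℓ × ℝ^u` and an open dense subset
`g*_{s-reg} ⊆ g*_reg` satisfying conditions (i)–(v).  The conditions that
`ν_big|_{g*_{s-reg}}` be a *moment map* for a Hamiltonian `𝕋_big`-action (in (iii)
and (v)) and the `𝕋_int`-principal-bundle structure in (iv) involve unformalized
symplectic/Poisson geometry; of (iv) we record the consequence that
`ν_big|_{g*_{s-reg}}` is an open map onto its image. -/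
structure GCDatum {G : Type*} [Group G] [TopologicalSpace G]
    [IsTopologicalGroup G] [CompactSpace G] [ConnectedSpace G]
    {E : Type*} [NormedAddCommGroup E] [NormedSpace ℝ E] [FiniteDimensional ℝ E]
    {ℓ u : ℕ} (S : CoadjointSetting G E ℓ u) : Type _ where
  /-- `ν_small = (ν_1, …, ν_ℓ)` -/
  nuSmall : E → Fin ℓ → ℝ
  /-- `ν_int = (ν_{ℓ+1}, …, ν_b)` -/
  nuInt : E → Fin u → ℝ
  /-- the set `g*_{s-reg}` of strongly regular elements -/
  sreg : Set E
  /-- `ν_big` is continuous -/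
  continuous_nuBig : Continuous fun ξ : E => ((nuSmall ξ, nuInt ξ) : RBig ℓ u)
  sreg_open : IsOpen sreg
  sreg_dense : Dense sreg
  sreg_subset_reg : sreg ⊆ S.reg
  /-- (i): `ν_1, …, ν_ℓ` are `G`-invariant -/
  invariant : ∀ (g : G) (ξ : E), nuSmall (S.coadj g ξ) = nuSmall ξ
  /-- (i): `ν_1, …, ν_ℓ` are smooth on `g*_reg` -/
  smooth_small : ∀ i, ContDiffOn ℝ (⊤ : ℕ∞) (fun ξ => nuSmall ξ i) S.reg
  /-- (ii): `{d_ξν_1, …, d_ξν_ℓ}` is a `ℤ`-basis of `Λ_ξ` for all `ξ ∈ g*_reg` -/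
  lattice_basis : ∀ ξ ∈ S.reg, ∃ bb : Module.Basis (Fin ℓ) ℤ (S.lattice ξ),
    ∀ i, (bb i : E →L[ℝ] ℝ) = fderivWithin ℝ (fun η => nuSmall η i) S.reg ξ
  /-- (iii): `ν_big|_{g*_{s-reg}}` is smooth (and is a moment map for a Hamiltonian
  `𝕋_big`-action on the Poisson manifold `g*_{s-reg}`; the latter is unformalized) -/
  smooth_sreg : ContDiffOn ℝ (⊤ : ℕ∞) (fun ξ : E => ((nuSmall ξ, nuInt ξ) : RBig ℓ u)) sreg
  /-- (iii): `ν_big|_{g*_{s-reg}}` is a submersion -/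
  submersion : ∀ ξ ∈ sreg,
    Function.Surjective (fderiv ℝ (fun ξ : E => ((nuSmall ξ, nuInt ξ) : RBig ℓ u)) ξ)
  /-- (iv): `ν_big : g*_{s-reg} → ν_big(g*_{s-reg})` is a principal `𝕋_int`-bundle;
  we record that it is an open map onto its image -/
  bundle_open : ∀ V : Set E, IsOpen V → ∃ W : Set (RBig ℓ u), IsOpen W ∧
    (fun ξ : E => ((nuSmall ξ, nuInt ξ) : RBig ℓ u)) '' (V ∩ sreg)
      = W ∩ (fun ξ : E => ((nuSmall ξ, nuInt ξ) : RBig ℓ u)) '' sreg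

namespace GCDatum

variable {G : Type*} [Group G] [TopologicalSpace G] [IsTopologicalGroup G]
  [CompactSpace G] [ConnectedSpace G]
  {E : Type*} [NormedAddCommGroup E] [NormedSpace ℝ E] [FiniteDimensional ℝ E]
  {ℓ u : ℕ} {S : CoadjointSetting G E ℓ u}

/-- `ν_big = (ν_small, ν_int) : g* → ℝ_big` -/
def nuBig (D : GCDatum S) : E → RBig ℓ u := fun ξ => (D.nuSmall ξ, D.nuInt ξ)

end GCDatum

/-- A *strong Gelfand–Cetlin datum* (Definition 2 of the paper): a Gelfand–Cetlin
datum satisfying the additional conditions (vi)–(ix). -/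
structure StrongGCDatum {G : Type*} [Group G] [TopologicalSpace G]
    [IsTopologicalGroup G] [CompactSpace G] [ConnectedSpace G]
    {E : Type*} [NormedAddCommGroup E] [NormedSpace ℝ E] [FiniteDimensional ℝ E]
    {ℓ u : ℕ} (S : CoadjointSetting G E ℓ u) extends GCDatum S : Type _ where
  /-- (vi): if `ν_small ξ = ν_small η` then `O_ξ = O_η` -/
  small_eq_orbit : ∀ ξ η : E, nuSmall ξ = nuSmall η → S.orbit ξ = S.orbit η
  /-- (vii): `ν_big` is proper -/
  proper_nuBig : IsProperMap fun ξ : E => ((nuSmall ξ, nuInt ξ) : RBig ℓ u)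
  /-- (viii): `g*_{s-reg}` is a union of fibers of `ν_big` -/
  sreg_fiber_union : ∀ ξ η : E,
    ((nuSmall ξ, nuInt ξ) : RBig ℓ u) = (nuSmall η, nuInt η) → ξ ∈ sreg → η ∈ sreg
  /-- (ix): `O_ξ ∩ g*_{s-reg}` is dense in `O_ξ` for `ξ ∈ g*_{s-reg}` -/
  orbit_sreg_dense : ∀ ξ ∈ sreg, S.orbit ξ ⊆ closure (S.orbit ξ ∩ sreg)

/-- A connected symplectic manifold `M` with an effective Hamiltonian `G`-action and
a proper moment map `μ : M → g*`.  The symplectic form `ω` itself is not formalized: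
we carry as abstract data the Liouville measure `λ_M` of `ωⁿ/n!` and, for each
`ξ ∈ g*`, the symplectic volume `volQuot ξ` of the symplectic quotient
`M ⫽_ξ G = μ⁻¹(O_ξ)/G` (a compact symplectic orbifold when `ξ` is a regular value
of `μ`). -/
structure HamiltonianSpace {G : Type*} [Group G] [TopologicalSpace G]
    [IsTopologicalGroup G] [CompactSpace G] [ConnectedSpace G]
    {E : Type*} [NormedAddCommGroup E] [NormedSpace ℝ E] [FiniteDimensional ℝ E]
    {ℓ u : ℕ} (S : CoadjointSetting G E ℓ u)
    (M : Type*) [TopologicalSpace M] [ConnectedSpace M] [MeasurableSpace M]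
    [BorelSpace M]
    (H : Type*) [NormedAddCommGroup H] [NormedSpace ℝ H]
    [ChartedSpace H M] [IsManifold 𝓘(ℝ, H) (⊤ : ℕ∞) M] : Type _ where
  /-- the moment map `μ : M → g*` -/
  mu : M → E
  smooth_mu : ContMDiff 𝓘(ℝ, H) 𝓘(ℝ, E) (⊤ : ℕ∞) mu
  proper_mu : IsProperMap mu
  /-- the `G`-action on `M` -/
  act : G →* Equiv.Perm M
  act_continuous : Continuous fun p : G × M => act p.1 p.2
  act_smooth : ∀ g : G, ContMDiff 𝓘(ℝ, H) 𝓘(ℝ, H) (⊤ : ℕ∞) ⇑(act g)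
  /-- the action is effective -/
  effective : ∀ g : G, (∀ m : M, act g m = m) → g = 1
  /-- `μ` is `G`-equivariant (part of the Hamiltonian condition) -/
  equivariant : ∀ (g : G) (m : M), mu (act g m) = S.coadj g (mu m)
  /-- the Liouville measure `λ_M` of `ωⁿ/n!` (abstract data) -/
  lambdaM : Measure M
  /-- the `G`-action is symplectic, hence preserves `λ_M` -/
  lambdaM_invariant : ∀ g : G, Measure.map (⇑(act g)) lambdaM = lambdaM
  /-- the symplectic volume of the symplectic quotient `M ⫽_ξ G` (abstract data) -/
  volQuot : E → ℝ≥0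

namespace HamiltonianSpace

variable {G : Type*} [Group G] [TopologicalSpace G] [IsTopologicalGroup G]
  [CompactSpace G] [ConnectedSpace G]
  {E : Type*} [NormedAddCommGroup E] [NormedSpace ℝ E] [FiniteDimensional ℝ E]
  {ℓ u : ℕ} {S : CoadjointSetting G E ℓ u}
  {M : Type*} [TopologicalSpace M] [ConnectedSpace M] [MeasurableSpace M]
  [BorelSpace M]
  {H : Type*} [NormedAddCommGroup H] [NormedSpace ℝ H]
  [ChartedSpace H M] [IsManifold 𝓘(ℝ, H) (⊤ : ℕ∞) M]

/-- `g*_{μ,s-reg}`: the set of regular values of `μ` lying in `g*_{s-reg}` -/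
def muSreg (P : HamiltonianSpace S M H) (D : GCDatum S) : Set E :=
  {ξ | ξ ∈ D.sreg ∧ ∀ m : M, P.mu m = ξ →
    Function.Surjective (mfderiv 𝓘(ℝ, H) 𝓘(ℝ, E) P.mu m)}

/-- `U_big = ν_big(g*_{μ,s-reg}) ⊆ ℝ_big` -/
def Ubig (P : HamiltonianSpace S M H) (D : GCDatum S) : Set (RBig ℓ u) :=
  D.nuBig '' P.muSreg D

/-- `μ_big = ν_big ∘ μ : M → ℝ_big` -/
def muBig (P : HamiltonianSpace S M H) (D : GCDatum S) : M → RBig ℓ u :=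
  D.nuBig ∘ P.mu

/-- the non-abelian Duistermaat–Heckman measure `DH_big = (μ_big)_* λ_M` on `ℝ_big` -/
def DHbig (P : HamiltonianSpace S M H) (D : GCDatum S) : Measure (RBig ℓ u) :=
  Measure.map (P.muBig D) P.lambdaM

/-- the symplectic quotient `M ⫽_ξ G = μ⁻¹(O_ξ)/G`, as a topological space -/
def SymplecticQuotient (P : HamiltonianSpace S M H) (ξ : E) : Type _ :=
  Quot fun m m' : {m : M // P.mu m ∈ S.orbit ξ} => ∃ g : G, P.act g m.1 = m'.1

instance (P : HamiltonianSpace S M H) (ξ : E) :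
    TopologicalSpace (P.SymplecticQuotient ξ) :=
  inferInstanceAs (TopologicalSpace (Quot _))

end HamiltonianSpace

/-- The data attached to a choice of maximal torus `T ⊆ G` with Lie algebra `t`,
positive roots, and a `G`-invariant inner product on `g`: the subspace `t* ⊆ g*`,
the fundamental Weyl chamber `t*_+ ⊆ t*` (a fundamental domain for the coadjoint
action), the sweeping map `π : g* → t*_+` (whose fibers are the coadjoint orbits),
and the Lebesgue measure `λ_{t*}` on `t*` dual to the Haar measure on `T`
normalized to total volume `1` (the normalization being abstract data). -/
structure ChamberSetting {G : Type*} [Group G] [TopologicalSpace G]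
    [IsTopologicalGroup G] [CompactSpace G] [ConnectedSpace G]
    {E : Type*} [NormedAddCommGroup E] [NormedSpace ℝ E] [FiniteDimensional ℝ E]
    [MeasurableSpace E] [BorelSpace E]
    {ℓ u : ℕ} (S : CoadjointSetting G E ℓ u) : Type _ where
  /-- `t* ⊆ g*` -/
  tdual : Submodule ℝ E
  tdual_rank : Module.finrank ℝ tdual = ℓ
  /-- the fundamental Weyl chamber `t*_+` -/
  chamber : Set E
  chamber_subset : chamber ⊆ (tdual : Set E)
  chamber_closed : IsClosed chamber
  /-- the sweeping map `π : g* → t*_+` -/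
  sweep : E → E
  sweep_continuous : Continuous sweep
  /-- `O_ξ ∩ t*_+ = {π ξ}` -/
  sweep_spec : ∀ ξ : E, S.orbit ξ ∩ chamber = {sweep ξ}
  /-- the Lebesgue measure on `t* ⊆ g*` dual to the normalized Haar measure on `T` -/
  lambdaT : Measure E
  lambdaT_lebesgue : ∃ e : (Fin ℓ → ℝ) ≃L[ℝ] tdual,
    lambdaT = Measure.map (fun x => (e x : E)) volume

namespace ChamberSetting

variable {G : Type*} [Group G] [TopologicalSpace G] [IsTopologicalGroup G]
  [CompactSpace G] [ConnectedSpace G]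
  {E : Type*} [NormedAddCommGroup E] [NormedSpace ℝ E] [FiniteDimensional ℝ E]
  [MeasurableSpace E] [BorelSpace E]
  {ℓ u : ℕ} {S : CoadjointSetting G E ℓ u}
  {M : Type*} [TopologicalSpace M] [ConnectedSpace M] [MeasurableSpace M]
  [BorelSpace M]
  {H : Type*} [NormedAddCommGroup H] [NormedSpace ℝ H]
  [ChartedSpace H M] [IsManifold 𝓘(ℝ, H) (⊤ : ℕ∞) M]

/-- `U_{t*_+} = π(g*_{μ,s-reg}) ⊆ t*_+` -/
def Ut (C : ChamberSetting S) (P : HamiltonianSpace S M H) (D : GCDatum S) : Set E :=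
  C.sweep '' P.muSreg D

/-- the `G`-invariant moment map `μ̄ = π ∘ μ : M → t*_+` -/
def muBar (C : ChamberSetting S) (P : HamiltonianSpace S M H) : M → E :=
  C.sweep ∘ P.mu

/-- the non-abelian Duistermaat–Heckman measure `DH_{t*_+} = μ̄_* λ_M` on `t*_+` -/
def DHt (C : ChamberSetting S) (P : HamiltonianSpace S M H) : Measure E :=
  Measure.map (C.muBar P) P.lambdaM

/-- the measure `λ_{t*_+}`: the restriction of `λ_{t*}` to `t*_+` -/
def lambdaChamber (C : ChamberSetting S) : Measure E :=
  C.lambdaT.restrict C.chamber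

end ChamberSetting

/-- (Proof content of Lemma 5.)  If `ξ ∈ g*` and `η ∈ g*_{μ,s-reg}` satisfy
`ν_big ξ = ν_big η`, then `ξ ∈ g*_{μ,s-reg}`, the coadjoint orbits `O_ξ` and `O_η`
coincide, and the fiber `ν_big⁻¹(ν_big η)` is contained in `O_η`. -/
theorem fiber_through_muSreg
    {G : Type*} [Group G] [TopologicalSpace G] [IsTopologicalGroup G]
    [CompactSpace G] [ConnectedSpace G]
    {E : Type*} [NormedAddCommGroup E] [NormedSpace ℝ E] [FiniteDimensional ℝ E]
    {ℓ u : ℕ} {S : CoadjointSetting G E ℓ u}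
    {M : Type*} [TopologicalSpace M] [ConnectedSpace M] [MeasurableSpace M]
    [BorelSpace M]
    {H : Type*} [NormedAddCommGroup H] [NormedSpace ℝ H]
    [ChartedSpace H M] [IsManifold 𝓘(ℝ, H) (⊤ : ℕ∞) M]
    (D : StrongGCDatum S) (P : HamiltonianSpace S M H)
    (ξ η : E) (hη : η ∈ P.muSreg D.toGCDatum)
    (h : D.toGCDatum.nuBig ξ = D.toGCDatum.nuBig η) :
    ξ ∈ P.muSreg D.toGCDatum ∧
    S.orbit ξ = S.orbit η ∧
    {ζ : E | D.toGCDatum.nuBig ζ = D.toGCDatum.nuBig η} ⊆ S.orbit η := by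
  obtain ⟨hηs, hηreg⟩ := hη
  have hsmall : D.nuSmall ξ = D.nuSmall η := congrArg Prod.fst h
  have horb : S.orbit ξ = S.orbit η := D.small_eq_orbit ξ η hsmall
  have hξs : ξ ∈ D.sreg := D.sreg_fiber_union η ξ h.symm hηs
  have hco : ∀ (a b : G) (v : E), S.coadj a (S.coadj b v) = S.coadj (a * b) v := by
    intro a b v; rw [map_mul]; rfl
  have hact : ∀ (a b : G) (x : M), P.act a (P.act b x) = P.act (a * b) x := by
    intro a b x; rw [map_mul]; rfl
  have hself : ∀ ζ : E, ζ ∈ S.orbit ζ := fun ζ => ⟨1, by simp only [map_one]; rfl⟩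
  have hξmem : ξ ∈ S.orbit η := by rw [← horb]; exact hself ξ
  obtain ⟨g, hg⟩ := hξmem
  refine ⟨⟨hξs, ?_⟩, horb, ?_⟩
  · intro m hm
    set m' := P.act g⁻¹ m with hm'def
    have hgm' : P.act g m' = m := by rw [hm'def, hact, mul_inv_cancel, map_one]; rfl
    have hmu' : P.mu m' = η := by
      rw [hm'def, P.equivariant, hm, ← hg, hco, inv_mul_cancel, map_one]; rfl
    have hd1 : MDifferentiableAt 𝓘(ℝ, H) 𝓘(ℝ, H) (⇑(P.act g⁻¹)) m :=
      (P.act_smooth g⁻¹).mdifferentiableAt (by simp)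
    have hd1' : MDifferentiableAt 𝓘(ℝ, H) 𝓘(ℝ, H) (⇑(P.act g⁻¹)) (P.act g m') :=
      hgm' ▸ hd1
    have hd2 : MDifferentiableAt 𝓘(ℝ, H) 𝓘(ℝ, E) P.mu (P.act g⁻¹ m) :=
      P.smooth_mu.mdifferentiableAt (by simp)
    have hd23 : MDifferentiableAt 𝓘(ℝ, H) 𝓘(ℝ, E) (P.mu ∘ ⇑(P.act g⁻¹)) m :=
      hd2.comp m hd1
    have hd3 : MDifferentiableAt 𝓘(ℝ, E) 𝓘(ℝ, E) (⇑(S.coadj g))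
        ((P.mu ∘ ⇑(P.act g⁻¹)) m) :=
      ((S.coadj g).differentiable.differentiableAt).mdifferentiableAt
    have hfun : P.mu = (⇑(S.coadj g)) ∘ (P.mu ∘ ⇑(P.act g⁻¹)) := by
      funext x
      simp only [Function.comp_apply, P.equivariant, hco, mul_inv_cancel, map_one]
      rfl
    -- surjectivity of mfderiv of the action map
    have hidfun : (⇑(P.act g⁻¹)) ∘ (⇑(P.act g)) = id := by
      funext x; simp only [Function.comp_apply, hact, inv_mul_cancel, map_one]; rfl
    have hcompact : mfderiv 𝓘(ℝ, H) 𝓘(ℝ, H) ((⇑(P.act g⁻¹)) ∘ (⇑(P.act g))) m'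
        = (mfderiv 𝓘(ℝ, H) 𝓘(ℝ, H) (⇑(P.act g⁻¹)) (P.act g m')).comp
          (mfderiv 𝓘(ℝ, H) 𝓘(ℝ, H) (⇑(P.act g)) m') :=
      mfderiv_comp m' hd1' ((P.act_smooth g).mdifferentiableAt (by simp))
    have hsurjact : Function.Surjective (mfderiv 𝓘(ℝ, H) 𝓘(ℝ, H) (⇑(P.act g⁻¹)) m) := by
      have hidsurj : Function.Surjective
          (mfderiv 𝓘(ℝ, H) 𝓘(ℝ, H) ((⇑(P.act g⁻¹)) ∘ (⇑(P.act g))) m') := by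
        rw [hidfun, mfderiv_id]; exact fun x => ⟨x, rfl⟩
      rw [hcompact, hgm'] at hidsurj
      exact fun y => (hidsurj y).elim fun x hx => ⟨_, hx⟩
    have hsurj' : Function.Surjective (mfderiv 𝓘(ℝ, H) 𝓘(ℝ, E) P.mu m') :=
      hηreg m' hmu'
    have hmf : mfderiv 𝓘(ℝ, H) 𝓘(ℝ, E) P.mu m
        = ((S.coadj g : E →L[ℝ] E)).comp
          ((mfderiv 𝓘(ℝ, H) 𝓘(ℝ, E) P.mu m').comp
            (mfderiv 𝓘(ℝ, H) 𝓘(ℝ, H) (⇑(P.act g⁻¹)) m)) := by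
      conv_lhs => rw [hfun]
      rw [mfderiv_comp m hd3 hd23, mfderiv_comp m hd2 hd1, mfderiv_eq_fderiv,
        (S.coadj g).fderiv]; rfl
    rw [hmf]
    intro y
    obtain ⟨w, hw⟩ := hsurj' ((S.coadj g).symm y)
    obtain ⟨x, hx⟩ := hsurjact w
    refine ⟨x, ?_⟩
    show (S.coadj g) ((mfderiv 𝓘(ℝ, H) 𝓘(ℝ, E) P.mu m')
      ((mfderiv 𝓘(ℝ, H) 𝓘(ℝ, H) (⇑(P.act g⁻¹)) m) x)) = y
    rw [hx, hw]
    exact (S.coadj g).apply_symm_apply y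
  · intro ζ hζ
    have : S.orbit ζ = S.orbit η := D.small_eq_orbit ζ η (congrArg Prod.fst hζ)
    exact this ▸ hself ζ
end
end

section
/- Let G be a compact connected Lie group of rank ℓ with Lie algebra g, let (ν_big, g*_{s-reg}) be a strong Gelfand–Cetlin datum on g*, and let M be a connected symplectic manifold endowed with an effective Hamiltonian G-action and proper moment map μ: M → g*. Then U_big = ν_big(g*_{μ,s-reg}) is an open subset of ℝ^b. -/
/-!
Common abstract framework for Crooks–Weitsman, "A non-abelian Duistermaat–Heckman
theorem" (arXiv:2302.02421).

`G` is a compact connected Lie group of rank `ℓ`.  The normed space `E` plays the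
role of the dual `g*` of the Lie algebra `g` of `G`, and `E →L[ℝ] ℝ` plays the role
of `g ≅ g**`.  We write `u = (dim g - ℓ)/2`, so that `b = ℓ + u = (dim g + ℓ)/2`.
Notions with no Mathlib formalization (the exponential lattice `Λ_ξ`, symplectic
forms, Liouville measures, symplectic volumes of coadjoint orbits and of symplectic
quotients, Hamiltonian/moment-map conditions for the torus actions of a
Gelfand–Cetlin datum) are carried as abstract data, documented in the comments.
-/

open MeasureTheory Set Function
open scoped ENNReal NNReal Manifold

noncomputable section

/-- The set of surjective continuous linear maps into a finite-dimensional space is open. -/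
theorem isOpen_setOf_surjective_clm {H E : Type*} [NormedAddCommGroup H] [NormedSpace ℝ H]
    [NormedAddCommGroup E] [NormedSpace ℝ E] [FiniteDimensional ℝ E] :
    IsOpen {f : H →L[ℝ] E | Function.Surjective f} := by
  rw [isOpen_iff_mem_nhds]
  intro f hf
  obtain ⟨s, hs⟩ := (f : H →ₗ[ℝ] E).exists_rightInverse_of_surjective
    (LinearMap.range_eq_top.2 hf)
  let S : E →L[ℝ] H := LinearMap.toContinuousLinearMap s
  have hfS : f.comp S = ContinuousLinearMap.id ℝ E := by
    ext v
    exact DFunLike.congr_fun hs v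
  have key : Metric.ball f (‖S‖ + 1)⁻¹ ⊆ {f : H →L[ℝ] E | Function.Surjective f} := by
    intro g hg
    have hS1 : (0:ℝ) < ‖S‖ + 1 := by positivity
    have hnorm : ‖(f - g).comp S‖ < 1 := by
      calc ‖(f - g).comp S‖ ≤ ‖f - g‖ * ‖S‖ := ContinuousLinearMap.opNorm_comp_le _ _
        _ < (‖S‖ + 1)⁻¹ * (‖S‖ + 1) := by
            apply mul_lt_mul' (le_of_lt ?_) (by linarith) (norm_nonneg _)
              (by positivity)
            rw [← dist_eq_norm]
            exact Metric.mem_ball'.1 (Metric.mem_ball.1 hg)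
        _ = 1 := by field_simp
    have hu : IsUnit (g.comp S) := by
      have : g.comp S = 1 - (f - g).comp S := by
        have : (f - g).comp S = f.comp S - g.comp S := by
          ext v; simp
        rw [this, hfS]
        ext v; simp [ContinuousLinearMap.one_def]
      rw [this]
      exact (Units.oneSub _ hnorm).isUnit
    obtain ⟨u, hu⟩ := hu
    intro y
    refine ⟨S ((↑u⁻¹ : E →L[ℝ] E) y), ?_⟩
    have := DFunLike.congr_fun u.mul_inv y
    rw [hu] at this
    simpa [ContinuousLinearMap.one_def] using this
  exact Filter.mem_of_superset (Metric.ball_mem_nhds f (by positivity)) key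

theorem HamiltonianSpace.isOpen_setOf_surjective_mfderiv
    {G : Type*} [Group G] [TopologicalSpace G] [IsTopologicalGroup G]
    [CompactSpace G] [ConnectedSpace G]
    {E : Type*} [NormedAddCommGroup E] [NormedSpace ℝ E] [FiniteDimensional ℝ E]
    {ℓ u : ℕ} {S : CoadjointSetting G E ℓ u}
    {M : Type*} [TopologicalSpace M] [ConnectedSpace M] [MeasurableSpace M]
    [BorelSpace M]
    {H : Type*} [NormedAddCommGroup H] [NormedSpace ℝ H]
    [ChartedSpace H M] [IsManifold 𝓘(ℝ, H) (⊤ : ℕ∞) M]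
    (P : HamiltonianSpace S M H) :
    IsOpen {m : M | Function.Surjective (mfderiv 𝓘(ℝ, H) 𝓘(ℝ, E) P.mu m)} := by
  rw [isOpen_iff_mem_nhds]
  intro m₀ hm₀
  -- the derivative of `μ` read in the tangent coordinates around `m₀`
  set F : M → (H →L[ℝ] E) :=
    inTangentCoordinates 𝓘(ℝ, H) 𝓘(ℝ, E) id P.mu (mfderiv 𝓘(ℝ, H) 𝓘(ℝ, E) P.mu) m₀ with hF
  have hsmooth : ContMDiffAt 𝓘(ℝ, H) 𝓘(ℝ, H →L[ℝ] E) (⊤ : ℕ∞) F m₀ :=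
    (P.smooth_mu.contMDiffAt).mfderiv_const (by exact_mod_cast (le_top : (⊤ : ℕ∞) + 1 ≤ ⊤))
  have hcont : ContinuousAt F m₀ := hsmooth.continuousAt
  have hFm₀ : F m₀ = mfderiv 𝓘(ℝ, H) 𝓘(ℝ, E) P.mu m₀ := by
    rw [hF]; erw [inTangentCoordinates_eq]
    · ext v
      simp only [ContinuousLinearMap.comp_apply]
      rw [tangentBundleCore_coordChange_model_space]
      erw [ContinuousLinearMap.comp_apply]
      erw [(tangentBundleCore 𝓘(ℝ, H) M).coordChange_self (achart H (id m₀)) (id m₀)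
        (mem_chart_source H (id m₀))]
    · exact mem_chart_source H (id m₀)
    · exact mem_chart_source E (P.mu m₀)
  have h1 : {m : M | Function.Surjective (F m)} ∈ nhds m₀ := by
    have : F ⁻¹' {f : H →L[ℝ] E | Function.Surjective f} ∈ nhds m₀ :=
      hcont.preimage_mem_nhds (isOpen_setOf_surjective_clm.mem_nhds (by rw [hFm₀]; exact hm₀))
    exact this
  have h2 : (chartAt H m₀).source ∈ nhds m₀ :=
    (chartAt H m₀).open_source.mem_nhds (mem_chart_source H m₀)
  filter_upwards [h1, h2] with m hm hm'
  have hFm : F m = (mfderiv 𝓘(ℝ, H) 𝓘(ℝ, E) P.mu m).comp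
      ((tangentBundleCore 𝓘(ℝ, H) M).coordChange (achart H (id m₀)) (achart H (id m)) (id m)) := by
    rw [hF]; erw [inTangentCoordinates_eq]
    · ext v
      simp only [ContinuousLinearMap.comp_apply]
      rw [tangentBundleCore_coordChange_model_space]
      rfl
    · exact hm'
    · exact mem_chart_source E (P.mu m)
  rw [hFm] at hm
  intro y
  obtain ⟨v, hv⟩ := hm y
  exact ⟨_, hv⟩

theorem HamiltonianSpace.isOpen_muSreg
    {G : Type*} [Group G] [TopologicalSpace G] [IsTopologicalGroup G]
    [CompactSpace G] [ConnectedSpace G]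
    {E : Type*} [NormedAddCommGroup E] [NormedSpace ℝ E] [FiniteDimensional ℝ E]
    {ℓ u : ℕ} {S : CoadjointSetting G E ℓ u}
    {M : Type*} [TopologicalSpace M] [ConnectedSpace M] [MeasurableSpace M]
    [BorelSpace M]
    {H : Type*} [NormedAddCommGroup H] [NormedSpace ℝ H]
    [ChartedSpace H M] [IsManifold 𝓘(ℝ, H) (⊤ : ℕ∞) M]
    (P : HamiltonianSpace S M H) (D : GCDatum S) :
    IsOpen (P.muSreg D) := by
  have hNc : IsClosed {m : M | ¬ Function.Surjective (mfderiv 𝓘(ℝ, H) 𝓘(ℝ, E) P.mu m)} := by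
    rw [← Set.compl_setOf]
    exact P.isOpen_setOf_surjective_mfderiv.isClosed_compl
  have himg : IsClosed (P.mu '' {m : M | ¬ Function.Surjective (mfderiv 𝓘(ℝ, H) 𝓘(ℝ, E) P.mu m)}) :=
    P.proper_mu.isClosedMap _ hNc
  have heq : P.muSreg D = D.sreg ∩
      (P.mu '' {m : M | ¬ Function.Surjective (mfderiv 𝓘(ℝ, H) 𝓘(ℝ, E) P.mu m)})ᶜ := by
    ext ξ
    simp only [HamiltonianSpace.muSreg, Set.mem_setOf_eq, Set.mem_inter_iff, Set.mem_compl_iff,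
      Set.mem_image, not_exists]
    constructor
    · rintro ⟨h1, h2⟩
      exact ⟨h1, fun m hm => hm.1 (h2 m hm.2)⟩
    · rintro ⟨h1, h2⟩
      refine ⟨h1, fun m hmu => ?_⟩
      by_contra hns
      exact h2 m ⟨hns, hmu⟩
  rw [heq]
  exact D.sreg_open.inter himg.isOpen_compl

/-- `U_big = ν_big(g*_{μ,s-reg})` is an open subset of `ℝ_big = ℝ^b`. -/
theorem Ubig_isOpen
    {G : Type*} [Group G] [TopologicalSpace G] [IsTopologicalGroup G]
    [CompactSpace G] [ConnectedSpace G]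
    {E : Type*} [NormedAddCommGroup E] [NormedSpace ℝ E] [FiniteDimensional ℝ E]
    {ℓ u : ℕ} {S : CoadjointSetting G E ℓ u}
    {M : Type*} [TopologicalSpace M] [ConnectedSpace M] [MeasurableSpace M]
    [BorelSpace M]
    {H : Type*} [NormedAddCommGroup H] [NormedSpace ℝ H]
    [ChartedSpace H M] [IsManifold 𝓘(ℝ, H) (⊤ : ℕ∞) M]
    (D : StrongGCDatum S) (P : HamiltonianSpace S M H) :
    IsOpen (P.Ubig D.toGCDatum) := by
  rw [isOpen_iff_mem_nhds]
  rintro y ⟨ξ, hξ, rfl⟩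
  have hsreg : ξ ∈ D.sreg := hξ.1
  have hcd : ContDiffAt ℝ (⊤ : ℕ∞) (fun ξ : E => ((D.nuSmall ξ, D.nuInt ξ) : RBig ℓ u)) ξ :=
    D.smooth_sreg.contDiffAt (D.sreg_open.mem_nhds hsreg)
  have hstrict := hcd.hasStrictFDerivAt (by norm_num)
  have hmap := hstrict.map_nhds_eq_of_surj
    (LinearMap.range_eq_top.2 (D.submersion ξ hsreg))
  have hnhds : P.muSreg D.toGCDatum ∈ nhds ξ :=
    (P.isOpen_muSreg D.toGCDatum).mem_nhds hξ
  have : (fun ξ : E => ((D.nuSmall ξ, D.nuInt ξ) : RBig ℓ u)) '' P.muSreg D.toGCDatum ∈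
      nhds ((D.nuSmall ξ, D.nuInt ξ) : RBig ℓ u) := by
    rw [← hmap]
    exact Filter.image_mem_map hnhds
  exact this
end
end
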